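/- arXiv:2501.04291 — 2 statements merged into one kernel-verified Lean document; each statement's English description precedes it below -/
import Mathlib

section
/- Let n ≥ 1, let f : ℝⁿ → ℝ be a convex function, x ∈ ℝⁿ and t > 0. Then ∂f(x) ⊆ D_t f(x). -/
open scoped RealInnerProductSpace

/-- The ε-subdifferential of `g` at `x`. -/
def epsSubdiff {n : ℕ} (g : EuclideanSpace ℝ (Fin n) → ℝ) (ε : ℝ)
    (x : EuclideanSpace ℝ (Fin n)) : Set (EuclideanSpace ℝ (Fin n)) :=
  {ξ | ∀ y, g y ≥ g x + ⟪ξ, y - x⟫ - ε}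

/-- The subdifferential of `g` at `x`. -/
def subdiff {n : ℕ} (g : EuclideanSpace ℝ (Fin n) → ℝ)
    (x : EuclideanSpace ℝ (Fin n)) : Set (EuclideanSpace ℝ (Fin n)) :=
  {ξ | ∀ y, g y ≥ g x + ⟪ξ, y - x⟫}

/-- The t-spherical subdifferential of `g` at `x`. -/
def sphSubdiff {n : ℕ} (g : EuclideanSpace ℝ (Fin n) → ℝ) (t : ℝ)
    (x : EuclideanSpace ℝ (Fin n)) : Set (EuclideanSpace ℝ (Fin n)) :=
  convexHull ℝ {ξ | ∃ d : EuclideanSpace ℝ (Fin n), ‖d‖ = 1 ∧ ξ ∈ subdiff g (x + t • d)}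

/-!
Subgradients of a continuous convex function are locally bounded and have a closed graph, so the
subgradients `S` taken at the points of the sphere of radius `t` about `x` form a compact set, and
by Carathéodory so does their convex hull. If `ξ ∈ ∂f(x)` lay outside it, some `v` would separate
`ξ` strictly from `conv S`; but monotonicity of the subdifferential gives `⟪v, ξ⟫ ≤ ⟪v, η⟫` for any
subgradient `η` at `x + t • v / ‖v‖`, which belongs to `S`.
-/

open Set Metric Module

theorem isCompact_convexHull {E : Type*} [NormedAddCommGroup E] [NormedSpace ℝ E]
    [FiniteDimensional ℝ E] {s : Set E} (hs : IsCompact s) : IsCompact (convexHull ℝ s) := by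
  -- Carathéodory: an affinely independent family in `E` has at most `finrank ℝ E + 1` points.
  have hcarath : convexHull ℝ s = ⋃ k ∈ Finset.range (finrank ℝ E + 2),
      (fun q : (Fin k → ℝ) × (Fin k → E) ↦ ∑ i, q.1 i • q.2 i) ''
        (stdSimplex ℝ (Fin k) ×ˢ univ.pi fun _ ↦ s) := by
    refine Subset.antisymm (fun y hy ↦ ?_) (iUnion₂_subset fun k _ ↦ ?_)
    · obtain ⟨ι, _, z, w, hzs, hz, hw0, hw1, rfl⟩ := eq_pos_convex_span_of_mem_convexHull hy
      have hcard : Fintype.card ι < finrank ℝ E + 2 := by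
        have := (vectorSpan ℝ (range z)).finrank_le
        have := hz.card_le_finrank_succ
        omega
      let e := Fintype.equivFin ι
      refine mem_iUnion₂.2 ⟨_, Finset.mem_range.2 hcard, (w ∘ e.symm, z ∘ e.symm),
        ⟨⟨fun i ↦ (hw0 _).le, ?_⟩, fun i _ ↦ hzs (mem_range_self _)⟩, ?_⟩
      · simpa [e.symm.sum_comp] using hw1
      · simp [e.symm.sum_comp (fun i ↦ w i • z i)]
    · rintro _ ⟨⟨w, p⟩, ⟨⟨hw0, hw1⟩, hp⟩, rfl⟩
      exact (convex_convexHull ℝ s).sum_mem (fun i _ ↦ hw0 i) hw1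
        fun i _ ↦ subset_convexHull ℝ s (hp i trivial)
  rw [hcarath]
  exact (Finset.range _).isCompact_biUnion fun k _ ↦
    ((isCompact_stdSimplex ℝ (Fin k)).prod (isCompact_univ_pi fun _ ↦ hs)).image (by fun_prop)

theorem ConvexOn.exists_strongDual_apply_sub_le {E : Type*} [NormedAddCommGroup E]
    [NormedSpace ℝ E] {f : E → ℝ} (hf : ConvexOn ℝ univ f) (hcont : Continuous f) (x : E) :
    ∃ l : StrongDual ℝ E, ∀ y, l (y - x) ≤ f y - f x := by
  have hopen : IsOpen {p : E × ℝ | p.1 ∈ univ ∧ f p.1 < p.2} := by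
    simpa using isOpen_lt (hcont.comp continuous_fst) continuous_snd
  obtain ⟨φ, hφ⟩ := geometric_hahn_banach_open_point hf.convex_strict_epigraph hopen
    (x := (x, f x)) (by simp)
  set c := φ (0, 1)
  have hφ_apply (y : E) (s : ℝ) : φ (y, s) = φ (y, 0) + s * c := by
    rw [← smul_eq_mul, ← map_smul, ← map_add]
    simp
  have hc : 0 < -c := by
    have := hφ (x, f x + 1) (by simp)
    rw [hφ_apply x (f x + 1), hφ_apply x (f x)] at this
    linarith
  refine ⟨(-c)⁻¹ • φ.comp (.inl ℝ E ℝ), fun y ↦ le_of_forall_pos_lt_add fun ε hε ↦ ?_⟩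
  have := hφ (y, f y + ε) (by simp [hε])
  rw [hφ_apply y, hφ_apply x] at this
  simp only [smul_apply, ContinuousLinearMap.comp_apply,
    ContinuousLinearMap.inl_apply, map_sub, smul_eq_mul, ← mul_sub]
  rw [inv_mul_lt_iff₀ hc]
  linarith

theorem Convex.exists_inner_lt_of_notMem {E : Type*} [NormedAddCommGroup E]
    [InnerProductSpace ℝ E] [CompleteSpace E] {s : Set E} {x : E} (hconv : Convex ℝ s)
    (hclosed : IsClosed s) (hx : x ∉ s) : ∃ v : E, ∀ a ∈ s, ⟪v, a⟫ < ⟪v, x⟫ := by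
  obtain ⟨φ, u, hφs, hφx⟩ := geometric_hahn_banach_closed_point hconv hclosed hx
  refine ⟨(InnerProductSpace.toDual ℝ E).symm φ, fun a ha ↦ ?_⟩
  simp only [InnerProductSpace.toDual_symm_apply]
  exact (hφs a ha).trans hφx

section subdiff

variable {n : ℕ} {f : EuclideanSpace ℝ (Fin n) → ℝ}

theorem ConvexOn.subdiff_nonempty (hf : ConvexOn ℝ univ f) (x : EuclideanSpace ℝ (Fin n)) :
    (subdiff f x).Nonempty := by
  obtain ⟨l, hl⟩ := hf.exists_strongDual_apply_sub_le hf.locallyLipschitz.continuous x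
  refine ⟨(InnerProductSpace.toDual ℝ _).symm l, fun y ↦ ?_⟩
  rw [InnerProductSpace.toDual_symm_apply]
  linarith [hl y]

theorem inner_le_inner_of_mem_subdiff {x y ξ η : EuclideanSpace ℝ (Fin n)}
    (hξ : ξ ∈ subdiff f x) (hη : η ∈ subdiff f y) : ⟪y - x, ξ⟫ ≤ ⟪y - x, η⟫ := by
  have hxy := hξ y
  have hyx := hη x
  rw [← neg_sub, inner_neg_right] at hyx
  rw [real_inner_comm, real_inner_comm η]
  linarith

theorem norm_le_of_mem_subdiff {z η : EuclideanSpace ℝ (Fin n)} {M : ℝ}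
    (hη : η ∈ subdiff f z) (hM : ∀ y ∈ closedBall z 1, f y ≤ M) : ‖η‖ ≤ M - f z := by
  rcases eq_or_ne η 0 with rfl | hη0
  · simpa using hM z (mem_closedBall_self zero_le_one)
  have hunit : ‖‖η‖⁻¹ • η‖ = 1 := norm_smul_inv_norm hη0
  have hinner : ⟪η, ‖η‖⁻¹ • η⟫ = ‖η‖ := by
    rw [real_inner_smul_right, real_inner_self_eq_norm_sq, sq, ← mul_assoc,
      inv_mul_cancel₀ (norm_ne_zero_iff.2 hη0), one_mul]
  have hsub := hη (z + ‖η‖⁻¹ • η)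
  rw [add_sub_cancel_left, hinner] at hsub
  have := hM (z + ‖η‖⁻¹ • η) (by simp [hunit])
  linarith

theorem isClosed_setOf_mem_subdiff (hf : Continuous f) :
    IsClosed {p : EuclideanSpace ℝ (Fin n) × EuclideanSpace ℝ (Fin n) | p.2 ∈ subdiff f p.1} := by
  have hinter : {p : EuclideanSpace ℝ (Fin n) × EuclideanSpace ℝ (Fin n) | p.2 ∈ subdiff f p.1} =
      ⋂ y, {p | f p.1 + ⟪p.2, y - p.1⟫ ≤ f y} := by
    ext
    simp [subdiff]
  rw [hinter]
  exact isClosed_iInter fun y ↦ isClosed_le (by fun_prop) continuous_const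

theorem isCompact_biUnion_subdiff (hf : Continuous f) {K : Set (EuclideanSpace ℝ (Fin n))}
    (hK : IsCompact K) : IsCompact (⋃ z ∈ K, subdiff f z) := by
  obtain ⟨M, hM⟩ := (hK.cthickening (r := 1)).bddAbove_image hf.continuousOn
  obtain ⟨m, hm⟩ := hK.bddBelow_image hf.continuousOn
  have hgraph : IsCompact ({p | p.2 ∈ subdiff f p.1} ∩ K ×ˢ univ) := by
    refine (hK.prod (isCompact_closedBall 0 (M - m))).of_isClosed_subset
      ((isClosed_setOf_mem_subdiff hf).inter (hK.isClosed.prod isClosed_univ)) ?_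
    rintro ⟨z, η⟩ ⟨hη, hz, -⟩
    refine ⟨hz, mem_closedBall_zero_iff.2 ?_⟩
    have := norm_le_of_mem_subdiff hη fun y hy ↦
      hM ⟨y, mem_cthickening_of_dist_le y z 1 K hz hy, rfl⟩
    linarith [hm ⟨z, hz, rfl⟩]
  convert hgraph.image continuous_snd
  ext η
  simp [and_comm]

end subdiff

theorem subdiff_subset_sphSubdiff {n : ℕ} (hn : 1 ≤ n)
    (f : EuclideanSpace ℝ (Fin n) → ℝ) (hf : ConvexOn ℝ Set.univ f)
    (x : EuclideanSpace ℝ (Fin n)) (t : ℝ) (ht : 0 < t) :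
    subdiff f x ⊆ sphSubdiff f t x := by
  intro ξ hξ
  set S := ⋃ d ∈ sphere (0 : EuclideanSpace ℝ (Fin n)) 1, subdiff f (x + t • d)
  have hsph : sphSubdiff f t x = convexHull ℝ S := by
    simp only [sphSubdiff, S]
    congr 1
    ext η
    simp
  have hS_compact : IsCompact S := by
    have := isCompact_biUnion_subdiff hf.locallyLipschitz.continuous
      ((isCompact_sphere (0 : EuclideanSpace ℝ (Fin n)) 1).image (f := fun d ↦ x + t • d)
        (by fun_prop))
    rwa [biUnion_image] at this
  rw [hsph]
  by_contra hξS
  obtain ⟨v, hv⟩ := (convex_convexHull ℝ S).exists_inner_lt_of_notMem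
    (isCompact_convexHull hS_compact).isClosed hξS
  have hv0 : v ≠ 0 := by
    rintro rfl
    let e := EuclideanSpace.single (⟨0, hn⟩ : Fin n) (1 : ℝ)
    obtain ⟨η, hη⟩ := hf.subdiff_nonempty (x + t • e)
    have := hv η (subset_convexHull ℝ S (mem_biUnion (by simp [e]) hη))
    simp at this
  obtain ⟨η, hη⟩ := hf.subdiff_nonempty (x + t • ‖v‖⁻¹ • v)
  have hηv := hv η (subset_convexHull ℝ S (mem_biUnion
    (mem_sphere_zero_iff_norm.2 (norm_smul_inv_norm hv0)) hη))
  have hmono := inner_le_inner_of_mem_subdiff hξ hη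
  rw [add_sub_cancel_left, smul_smul, real_inner_smul_left, real_inner_smul_left] at hmono
  have : 0 < t * ‖v‖⁻¹ := by positivity
  linarith [le_of_mul_le_mul_left hmono this]
end

section
/- Let f : ℝⁿ → ℝ be convex and Lipschitz with constant L > 0 (|f(y) − f(z)| ≤ L‖y − z‖ for all y, z ∈ ℝⁿ), let x ∈ ℝⁿ and ε ≥ 0. Then convexHull ℝ (⋃_{y ∈ closedBall(x, ε/(2L))} ∂f(y)) ⊆ ∂_ε f(x). -/
/-!
A subgradient `ξ` of an `L`-Lipschitz function has `‖ξ‖ ≤ L`, so moving the base point of its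
subgradient inequality from `y` to `x` costs at most `L‖y - x‖` in the value of `f` and at most
`L‖y - x‖` in the linear term: `ξ` is a `2L‖y - x‖`-subgradient at `x`, hence an
`ε`-subgradient when `‖y - x‖ ≤ ε / (2L)`. Since `∂_ε f(x)` is convex, it contains the convex hull.
-/

open scoped RealInnerProductSpace

variable {n : ℕ}

lemma convex_epsSubdiff (g : EuclideanSpace ℝ (Fin n) → ℝ) (ε : ℝ)
    (x : EuclideanSpace ℝ (Fin n)) : Convex ℝ (epsSubdiff g ε x) := by
  intro ξ hξ η hη a b ha hb hab y
  have hξy := mul_le_mul_of_nonneg_left (hξ y) ha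
  have hηy := mul_le_mul_of_nonneg_left (hη y) hb
  rw [ge_iff_le, inner_add_left, real_inner_smul_left, real_inner_smul_left]
  linear_combination hξy + hηy + (g y - g x + ε) * hab

lemma epsSubdiff_mono {g : EuclideanSpace ℝ (Fin n) → ℝ} {ε ε' : ℝ}
    {x : EuclideanSpace ℝ (Fin n)} (h : ε ≤ ε') : epsSubdiff g ε x ⊆ epsSubdiff g ε' x :=
  fun _ hξ y => (hξ y).trans' (by linarith)

lemma norm_le_of_mem_subdiff_s15 {f : EuclideanSpace ℝ (Fin n) → ℝ} {L : ℝ} (hL : 0 ≤ L)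
    (hLip : ∀ y z, |f y - f z| ≤ L * ‖y - z‖) {y ξ : EuclideanSpace ℝ (Fin n)}
    (hξ : ξ ∈ subdiff f y) : ‖ξ‖ ≤ L := by
  -- test the subgradient inequality in the direction of `ξ` itself
  have hsub : ‖ξ‖ ^ 2 ≤ f (y + ξ) - f y := by
    have := hξ (y + ξ)
    rw [add_sub_cancel_left, real_inner_self_eq_norm_sq] at this
    linarith
  have hlip : f (y + ξ) - f y ≤ L * ‖ξ‖ := by
    simpa using (abs_le.mp (hLip (y + ξ) y)).2
  rcases (norm_nonneg ξ).eq_or_lt with h0 | hpos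
  · rw [← h0]; exact hL
  · nlinarith

lemma subdiff_subset_epsSubdiff {f : EuclideanSpace ℝ (Fin n) → ℝ} {L : ℝ} (hL : 0 ≤ L)
    (hLip : ∀ y z, |f y - f z| ≤ L * ‖y - z‖) (x y : EuclideanSpace ℝ (Fin n)) :
    subdiff f y ⊆ epsSubdiff f (2 * L * ‖y - x‖) x := by
  intro ξ hξ z
  have hinner : -(L * ‖y - x‖) ≤ ⟪ξ, x - y⟫ := by
    have hnorm := norm_le_of_mem_subdiff_s15 hL hLip hξ
    calc -(L * ‖y - x‖) ≤ -(‖ξ‖ * ‖x - y‖) := by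
          rw [norm_sub_rev]; gcongr
      _ ≤ -|⟪ξ, x - y⟫| := neg_le_neg (abs_real_inner_le_norm ξ (x - y))
      _ ≤ ⟪ξ, x - y⟫ := neg_abs_le _
  have hsplit : ⟪ξ, z - y⟫ = ⟪ξ, z - x⟫ + ⟪ξ, x - y⟫ := by
    rw [← inner_add_right, sub_add_sub_cancel]
  have hval := (abs_le.mp (hLip y x)).1
  have hsubgrad := hξ z
  rw [hsplit] at hsubgrad
  linarith

theorem goldstein_eps_subset_eps_subdiff_general {n : ℕ}
    (f : EuclideanSpace ℝ (Fin n) → ℝ)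
    (L : ℝ) (hL : 0 < L) (hLip : ∀ y z, |f y - f z| ≤ L * ‖y - z‖)
    (x : EuclideanSpace ℝ (Fin n)) (ε : ℝ) :
    convexHull ℝ (⋃ y ∈ Metric.closedBall x (ε / (2 * L)), subdiff f y) ⊆
      epsSubdiff f ε x := by
  refine convexHull_min ?_ (convex_epsSubdiff f ε x)
  simp only [Set.iUnion_subset_iff, Metric.mem_closedBall, dist_eq_norm]
  intro y hy
  have hradius : 2 * L * ‖y - x‖ ≤ ε := by
    rwa [le_div_iff₀' (by positivity)] at hy
  exact (subdiff_subset_epsSubdiff hL.le hLip x y).trans (epsSubdiff_mono hradius)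

theorem goldstein_eps_subset_eps_subdiff {n : ℕ}
    (f : EuclideanSpace ℝ (Fin n) → ℝ) (hf : ConvexOn ℝ Set.univ f)
    (L : ℝ) (hL : 0 < L) (hLip : ∀ y z, |f y - f z| ≤ L * ‖y - z‖)
    (x : EuclideanSpace ℝ (Fin n)) (ε : ℝ) (hε : 0 ≤ ε) :
    convexHull ℝ (⋃ y ∈ Metric.closedBall x (ε / (2 * L)), subdiff f y) ⊆
      epsSubdiff f ε x :=
  goldstein_eps_subset_eps_subdiff_general f L hL hLip x ε
end
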